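/- Let n ≥ 4k + 1 and k ≥ 1, let σ be a permutation of ZMod n and x = x(σ) the corresponding 2k-NN graph. For distinct vertices j, j', let d = d_x(j, j') be the cyclic distance between σ⁻¹(j) and σ⁻¹(j'). Then the number of common neighbors of j and j' in x equals 2k − 1 − d if 1 ≤ d ≤ k, equals 2k + 1 − d if k < d ≤ 2k, and equals 0 if d > 2k. -/

import Mathlib

open MeasureTheory Filter
open scoped ENNReal NNReal

noncomputable section

/-- Cyclic distance on `ZMod n`: `min(m, n-m)` where `m` is the representative of `a-b`. -/
def cycDist {n : ℕ} (a b : ZMod n) : ℕ := min (a - b).val (b - a).val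

/-- The `2k`-nearest-neighbor graph on `ZMod n` associated to a permutation `σ`. -/
def knnGraph (n k : ℕ) (σ : Equiv.Perm (ZMod n)) : SimpleGraph (ZMod n) where
  Adj u v := u ≠ v ∧ cycDist (σ.symm u) (σ.symm v) ≤ k
  symm := by
    refine ⟨fun u v h => ?_⟩
    refine ⟨h.1.symm, ?_⟩
    unfold cycDist at *
    omega
  loopless := by refine ⟨fun u h => ?_⟩; exact h.1 rfl

/-- The set of all `2k`-NN graphs on `ZMod n`. -/
def knnGraphs (n k : ℕ) : Set (SimpleGraph (ZMod n)) := Set.range (knnGraph n k)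

/-- The hidden `2k`-NN graph: the one associated to the identity permutation. -/
def xstar (n k : ℕ) : SimpleGraph (ZMod n) := knnGraph n k (Equiv.refl _)

/-- Hamming distance between two graphs: the number of unordered pairs adjacent in
exactly one of them. -/
def gdist {n : ℕ} (x y : SimpleGraph (ZMod n)) : ℕ := (symmDiff x.edgeSet y.edgeSet).ncard

/-- `2k`-NN graphs at Hamming distance `2Δ` from the hidden one. -/
def XDelta (n k Δ : ℕ) : Set (SimpleGraph (ZMod n)) :=
  {x | x ∈ knnGraphs n k ∧ gdist x (xstar n k) = 2 * Δ}

open scoped Classical in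
/-- The hidden `2k`-NN graph model: independent edge weights, with law `P` on the edges of
the hidden graph `x` and law `Q` elsewhere. -/
def edgeMeasure (n : ℕ) (P Q : Measure ℝ) (x : SimpleGraph (ZMod n)) :
    Measure (Sym2 (ZMod n) → ℝ) :=
  if h : n = 0 then 0 else
    haveI : NeZero n := ⟨h⟩
    Measure.pi fun e => if e ∈ x.edgeSet then P else Q

/-- `⟨L, x⟩ = Σ_{e edge of x} log (dP/dQ)(w_e)`. -/
def score (n : ℕ) (P Q : Measure ℝ) (x : SimpleGraph (ZMod n))
    (w : Sym2 (ZMod n) → ℝ) : ℝ :=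
  ∑ᶠ e ∈ x.edgeSet, llr P Q (w e)

/-- `Σ_{e edge of x} w_e`. -/
def wsum (n : ℕ) (x : SimpleGraph (ZMod n)) (w : Sym2 (ZMod n) → ℝ) : ℝ :=
  ∑ᶠ e ∈ x.edgeSet, w e

/-- The order-1/2 Rényi divergence `α(P,Q) = -2 log ∫ √(dP/dQ) dQ`. -/
def renyiHalf (P Q : Measure ℝ) : ℝ :=
  -2 * Real.log (∫ t, Real.sqrt ((P.rnDeriv Q) t).toReal ∂Q)

/-- The Kullback-Leibler divergence `D(P‖Q) = ∫ log (dP/dQ) dP`. -/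
def klDivR (P Q : Measure ℝ) : ℝ := ∫ t, llr P Q t ∂P

/-! Measure positions on the cycle from `σ⁻¹ j` by `ZMod.valMinAbs`, so that `σ⁻¹ j'` sits at
an integer `e` with `|e| = d ≤ n / 2`. The common neighbours of `j` and `j'` then sit at the
integers `i ∉ {0, e}` with `|i| ≤ k` and `|i - e| ≤ k`: since `|i - e| + k < n` when
`n ≥ 4k + 1`, going around the cycle never makes `i` and `e` closer. These integers form an
interval of length `2k + 1 - d`, minus the points `0` and `e`, which lie in it exactly when
`d ≤ k`. -/

section CommonNeighbors

variable {n : ℕ}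

open Finset

lemma cycDist_eq_natAbs_valMinAbs [NeZero n] (a b : ZMod n) :
    cycDist a b = (b - a).valMinAbs.natAbs := by
  rw [ZMod.valMinAbs_natAbs_eq_min, cycDist, ← neg_sub, ZMod.neg_val]
  split_ifs <;> simp_all [min_comm]

lemma ZMod.natAbs_valMinAbs_intCast_le_iff {k : ℕ} {i : ℤ} (h : i.natAbs + k < n) :
    (i : ZMod n).valMinAbs.natAbs ≤ k ↔ i.natAbs ≤ k := by
  have : NeZero n := ⟨by omega⟩
  set v := (i : ZMod n).valMinAbs
  constructor
  · intro hv
    have hdvd : (n : ℤ) ∣ i - v := by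
      rw [← ZMod.intCast_eq_intCast_iff_dvd_sub, ZMod.coe_valMinAbs]
    have : i - v = 0 := Int.eq_zero_of_dvd_of_natAbs_lt_natAbs hdvd (by omega)
    omega
  · exact (ZMod.natAbs_min_of_le_div_two n v i (ZMod.coe_valMinAbs _)
      (ZMod.natAbs_valMinAbs_le _)).trans

def commonOffsets (k : ℕ) (e : ℤ) : Finset ℤ :=
  {i ∈ Icc (-(k : ℤ)) k | i ≠ 0 ∧ i ≠ e ∧ (i - e).natAbs ≤ k}

lemma mem_commonOffsets {k : ℕ} {e i : ℤ} :
    i ∈ commonOffsets k e ↔ i ≠ 0 ∧ i ≠ e ∧ i.natAbs ≤ k ∧ (i - e).natAbs ≤ k := by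
  simp only [commonOffsets, mem_filter, mem_Icc]
  omega

lemma card_commonOffsets (k : ℕ) {e : ℤ} (he : e ≠ 0) :
    #(commonOffsets k e) = 2 * k + 1 - e.natAbs - if e.natAbs ≤ k then 2 else 0 := by
  set window := Icc (max (-(k : ℤ)) (e - k)) (min (k : ℤ) (e + k))
  have hwindow : #window = 2 * k + 1 - e.natAbs := by
    rw [Int.card_Icc]; omega
  split_ifs with hek
  · have : commonOffsets k e = (window.erase 0).erase e := by
      ext i; simp only [mem_commonOffsets, mem_erase, mem_Icc, window]; omega
    rw [this, card_erase_of_mem (by simp [window]; omega),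
      card_erase_of_mem (by simp [window]; omega), hwindow]
    omega
  · have : commonOffsets k e = window := by
      ext i; simp only [mem_commonOffsets, mem_Icc, window]; omega
    rw [this, hwindow, Nat.sub_zero]

lemma preimage_valMinAbs_sub_commonOffsets {k : ℕ} (hn : 4 * k + 1 ≤ n) (a b : ZMod n) :
    (fun c => (c - a).valMinAbs) ⁻¹' commonOffsets k (b - a).valMinAbs =
      {c | c ≠ a ∧ cycDist a c ≤ k} ∩ {c | c ≠ b ∧ cycDist b c ≤ k} := by
  have : NeZero n := ⟨by omega⟩
  ext c
  have hb : c - b = (((c - a).valMinAbs - (b - a).valMinAbs : ℤ) : ZMod n) := by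
    push_cast [ZMod.coe_valMinAbs]; ring
  have he := ZMod.natAbs_valMinAbs_le (b - a)
  simp only [Set.mem_preimage, mem_coe, mem_commonOffsets, Set.mem_inter_iff,
    Set.mem_ofPred, cycDist_eq_natAbs_valMinAbs, ne_eq, ZMod.valMinAbs_eq_zero, sub_eq_zero,
    ZMod.valMinAbs_inj, sub_left_inj, hb]
  constructor
  · rintro ⟨hca, hcb, hi, hie⟩
    exact ⟨⟨hca, hi⟩, hcb, (ZMod.natAbs_valMinAbs_intCast_le_iff (by omega)).2 hie⟩
  · rintro ⟨⟨hca, hi⟩, hcb, hie⟩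
    exact ⟨hca, hcb, hi, (ZMod.natAbs_valMinAbs_intCast_le_iff (by omega)).1 hie⟩

lemma ncard_common_cycle_neighbors {k : ℕ} (hn : 4 * k + 1 ≤ n) {a b : ZMod n}
    (hab : a ≠ b) :
    ({c | c ≠ a ∧ cycDist a c ≤ k} ∩ {c | c ≠ b ∧ cycDist b c ≤ k}).ncard =
      2 * k + 1 - cycDist a b - if cycDist a b ≤ k then 2 else 0 := by
  have : NeZero n := ⟨by omega⟩
  have hsurj : (commonOffsets k (b - a).valMinAbs : Set ℤ) ⊆
      Set.range fun c => (c - a).valMinAbs := by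
    intro i hi
    have hik := (mem_commonOffsets.1 hi).2.2.1
    refine ⟨a + i, show (a + i - a).valMinAbs = i from ?_⟩
    rw [add_sub_cancel_left, ZMod.valMinAbs_spec]
    exact ⟨rfl, by simp only [Set.mem_Ioc]; omega⟩
  have hinj : (fun c : ZMod n => (c - a).valMinAbs).Injective :=
    ZMod.injective_valMinAbs.comp sub_left_injective
  rw [← preimage_valMinAbs_sub_commonOffsets hn,
    Set.ncard_preimage_of_injective_subset_range hinj hsurj, Set.ncard_coe_finset,
    card_commonOffsets _ (by simpa [sub_eq_zero] using hab.symm), cycDist_eq_natAbs_valMinAbs]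

lemma knnGraph_neighborSet (k : ℕ) (σ : Equiv.Perm (ZMod n)) (u : ZMod n) :
    (knnGraph n k σ).neighborSet u =
      σ '' {c | c ≠ σ.symm u ∧ cycDist (σ.symm u) c ≤ k} := by
  ext v
  simp [knnGraph, Equiv.eq_symm_apply, ne_comm]

end CommonNeighbors

theorem common_neighbors_card_general (n k : ℕ) (hn : 4 * k + 1 ≤ n)
    (σ : Equiv.Perm (ZMod n)) (j j' : ZMod n) (hjj : j ≠ j') :
    (1 ≤ cycDist (σ.symm j) (σ.symm j') → cycDist (σ.symm j) (σ.symm j') ≤ k →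
      ((knnGraph n k σ).neighborSet j ∩ (knnGraph n k σ).neighborSet j').ncard
        = 2 * k - 1 - cycDist (σ.symm j) (σ.symm j')) ∧
    (k < cycDist (σ.symm j) (σ.symm j') → cycDist (σ.symm j) (σ.symm j') ≤ 2 * k →
      ((knnGraph n k σ).neighborSet j ∩ (knnGraph n k σ).neighborSet j').ncard
        = 2 * k + 1 - cycDist (σ.symm j) (σ.symm j')) ∧
    (2 * k < cycDist (σ.symm j) (σ.symm j') →
      ((knnGraph n k σ).neighborSet j ∩ (knnGraph n k σ).neighborSet j').ncard = 0) := by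
  have hcard := ncard_common_cycle_neighbors hn (σ.symm.injective.ne hjj)
  rw [← Set.ncard_image_of_injective _ σ.injective, Set.image_inter σ.injective,
    ← knnGraph_neighborSet, ← knnGraph_neighborSet] at hcard
  refine ⟨fun _ _ => ?_, fun _ _ => ?_, fun _ => ?_⟩ <;> split_ifs at hcard <;> omega

/-- **Number of common neighbors in a `2k`-NN graph (Fact 3 in the proof of Lemma 5).**
For `n ≥ 4k+1`, distinct vertices `j, j\'` at cyclic distance `d` (along the Hamiltonian
cycle of `σ`) have `2k-1-d` common neighbors if `1 ≤ d ≤ k`, `2k+1-d` common neighbors if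
`k < d ≤ 2k`, and none if `d > 2k`. -/
theorem common_neighbors_card (n k : ℕ) (hk : 1 ≤ k) (hn : 4 * k + 1 ≤ n)
    (σ : Equiv.Perm (ZMod n)) (j j' : ZMod n) (hjj : j ≠ j') :
    (1 ≤ cycDist (σ.symm j) (σ.symm j') → cycDist (σ.symm j) (σ.symm j') ≤ k →
      ((knnGraph n k σ).neighborSet j ∩ (knnGraph n k σ).neighborSet j').ncard
        = 2 * k - 1 - cycDist (σ.symm j) (σ.symm j')) ∧
    (k < cycDist (σ.symm j) (σ.symm j') → cycDist (σ.symm j) (σ.symm j') ≤ 2 * k →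
      ((knnGraph n k σ).neighborSet j ∩ (knnGraph n k σ).neighborSet j').ncard
        = 2 * k + 1 - cycDist (σ.symm j) (σ.symm j')) ∧
    (2 * k < cycDist (σ.symm j) (σ.symm j') →
      ((knnGraph n k σ).neighborSet j ∩ (knnGraph n k σ).neighborSet j').ncard = 0) :=
  common_neighbors_card_general n k hn σ j j' hjj
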